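/- Let M and N be matroids on E. The maximum size of a common independent set of M and N equals the minimum over X ⊆ E of r_M(X) + r_N(E \ X). -/

import Mathlib

/-!
Weak duality: for a common independent set `I`, the parts `I ∩ X` and `I \ X` are independent
in `M` inside `X` and in `N` inside `E \ X`.

Conversely, induct on the ground set, writing `f X = r_M X + r_N (E \ X)`. For `e ∈ E`, the
deletions by `e` give `X₁` and `I₁` with `r_M X₁ + r_N (E \ insert e X₁) ≤ |I₁|`; if `e` is a
loop of `M` or of `N`, then `insert e X₁` or `X₁` works. Otherwise the contractions by `e` give
`X₂` and `I₂` with `f (insert e X₂) ≤ |insert e I₂| + 1`. Submodularity of `r_M` at `X₁` and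
`insert e X₂`, and of `r_N` at their complements, gives
`f (X₁ ∩ X₂) + f (insert e (X₁ ∪ X₂)) ≤ |I₁| + |insert e I₂| + 1`,
so one of the two values is at most `max |I₁| |insert e I₂|`.
-/

/-- The rank of a set `X` in a matroid `M`: the size of a maximal independent subset of `X`. -/
noncomputable def mrank {α : Type*} (M : Matroid α) (X : Set α) : ℕ :=
  sSup {n | ∃ I, I ⊆ X ∧ M.Indep I ∧ I.ncard = n}

namespace Matroid

open Set

variable {α : Type*} {M N : Matroid α} {I X : Set α} {e : α}

lemma IsBasis'.mrank_eq_ncard [M.RankFinite] (hI : M.IsBasis' I X) : mrank M X = I.ncard := by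
  refine IsGreatest.csSup_eq ⟨⟨I, hI.subset, hI.indep, rfl⟩, ?_⟩
  rintro _ ⟨J, hJX, hJ, rfl⟩
  have hJI : J.encard ≤ I.encard := hI.encard_eq_eRk ▸ hJ.encard_le_eRk_of_subset hJX
  rwa [← hI.indep.finite.cast_ncard_eq, ← hJ.finite.cast_ncard_eq, Nat.cast_le] at hJI

lemma cast_mrank (M : Matroid α) [M.RankFinite] (X : Set α) : (mrank M X : ℕ∞) = M.eRk X := by
  obtain ⟨I, hI⟩ := M.exists_isBasis' X
  rw [hI.mrank_eq_ncard, hI.indep.finite.cast_ncard_eq, hI.encard_eq_eRk]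

lemma Indep.ncard_le_mrank [M.RankFinite] (hI : M.Indep I) (hIX : I ⊆ X) :
    I.ncard ≤ mrank M X := by
  rw [← Nat.cast_le (α := ℕ∞), cast_mrank, hI.finite.cast_ncard_eq]
  exact hI.encard_le_eRk_of_subset hIX

lemma mrank_empty (M : Matroid α) : mrank M ∅ = 0 := by
  simp [mrank, subset_empty_iff]

lemma mrank_inter_add_mrank_union_le (M : Matroid α) [M.RankFinite] (X Y : Set α) :
    mrank M (X ∩ Y) + mrank M (X ∪ Y) ≤ mrank M X + mrank M Y := by
  rw [← Nat.cast_le (α := ℕ∞)]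
  push_cast [cast_mrank]
  exact M.eRk_inter_add_eRk_union_le X Y

lemma IsLoop.mrank_insert [M.RankFinite] (he : M.IsLoop e) (X : Set α) :
    mrank M (insert e X) = mrank M X := by
  rw [← Nat.cast_inj (R := ℕ∞), cast_mrank, cast_mrank, insert_eq, union_comm]
  exact M.eRk_eq_eRk_union_eRk_le_zero X he.eRk_eq.le

lemma mrank_delete_of_disjoint (M : Matroid α) {D : Set α} (hXD : Disjoint X D) :
    mrank (M ＼ D) X = mrank M X := by
  unfold mrank
  congr 1; ext n
  refine exists_congr fun I ↦ and_congr_right fun hIX ↦ ?_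
  rw [delete_indep_iff, and_iff_left (hXD.mono_left hIX)]

lemma IsNonloop.mrank_contractElem_add_one [M.RankFinite] (he : M.IsNonloop e)
    (hX : X ⊆ M.E \ {e}) :
    mrank (M ／ {e}) X + 1 = mrank M (insert e X) := by
  obtain ⟨J, hJ⟩ := (M ／ {e}).exists_isBasis X hX
  have hJe : e ∉ J := fun h ↦ (hX (hJ.subset h)).2 rfl
  have hJ' := he.indep.union_isBasis_union_of_contract_isBasis hJ
  rw [union_singleton, union_singleton] at hJ'
  rw [hJ.isBasis'.mrank_eq_ncard, hJ'.isBasis'.mrank_eq_ncard,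
    ncard_insert_of_notMem hJe hJ.indep.finite]

lemma Indep.ncard_le_mrank_add_mrank_diff [M.RankFinite] [N.RankFinite] (hIM : M.Indep I)
    (hIN : N.Indep I) (X : Set α) : I.ncard ≤ mrank M X + mrank N (M.E \ X) :=
  calc I.ncard = (I ∩ X).ncard + (I \ X).ncard :=
        (ncard_inter_add_ncard_sdiff_eq_ncard I X hIM.finite).symm
    _ ≤ mrank M X + mrank N (M.E \ X) :=
        add_le_add ((hIM.subset inter_subset_left).ncard_le_mrank inter_subset_right)
          ((hIN.subset sdiff_subset).ncard_le_mrank (sdiff_subset_sdiff_left hIM.subset_ground))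

lemma mrank_delete_add_mrank_delete_diff (M N : Matroid α) (heX : e ∉ X) :
    mrank (M ＼ {e}) X + mrank (N ＼ {e}) ((M ＼ {e}).E \ X)
      = mrank M X + mrank N (M.E \ insert e X) := by
  rw [delete_ground, sdiff_sdiff, singleton_union,
    mrank_delete_of_disjoint M (disjoint_singleton_right.2 heX),
    mrank_delete_of_disjoint N (disjoint_singleton_right.2 fun h ↦ h.2 (mem_insert e X))]

lemma IsNonloop.mrank_contract_add_mrank_contract_diff [M.RankFinite] [N.RankFinite]
    (heM : M.IsNonloop e) (heN : N.IsNonloop e) (hNE : N.E = M.E) (hX : X ⊆ M.E \ {e}) :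
    mrank (M ／ {e}) X + mrank (N ／ {e}) ((M ／ {e}).E \ X) + 2
      = mrank M (insert e X) + mrank N (M.E \ X) := by
  have hXc : insert e ((M ／ {e}).E \ X) = M.E \ X := by
    have heE := heM.mem_ground
    have heX : e ∉ X := fun h ↦ (hX h).2 rfl
    rw [contract_ground]
    grind
  rw [← hXc, ← heM.mrank_contractElem_add_one hX,
    ← heN.mrank_contractElem_add_one (by rw [hNE]; exact sdiff_subset)]
  ring

lemma exists_mrank_add_mrank_diff_le_max [M.RankFinite] [N.RankFinite] {X₁ X₂ : Set α} {p q : ℕ}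
    (heE : e ∈ M.E) (hX₁ : X₁ ⊆ M.E) (hX₂ : X₂ ⊆ M.E) (heX₁ : e ∉ X₁) (heX₂ : e ∉ X₂)
    (h₁ : mrank M X₁ + mrank N (M.E \ insert e X₁) ≤ p)
    (h₂ : mrank M (insert e X₂) + mrank N (M.E \ X₂) ≤ q + 1) :
    ∃ X ⊆ M.E, mrank M X + mrank N (M.E \ X) ≤ max p q := by
  have hM := M.mrank_inter_add_mrank_union_le X₁ (insert e X₂)
  have hN := N.mrank_inter_add_mrank_union_le (M.E \ insert e X₁) (M.E \ X₂)
  rw [inter_insert_of_notMem heX₁, union_insert] at hM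
  rw [sdiff_inter_sdiff, ← sdiff_inter, insert_union, insert_inter_of_notMem heX₂] at hN
  by_cases hcap : mrank M (X₁ ∩ X₂) + mrank N (M.E \ (X₁ ∩ X₂)) ≤ max p q
  · exact ⟨X₁ ∩ X₂, inter_subset_left.trans hX₁, hcap⟩
  · exact ⟨insert e (X₁ ∪ X₂), insert_subset heE (union_subset hX₁ hX₂), by omega⟩

theorem exists_indep_indep_mrank_add_mrank_diff_le_ncard (M N : Matroid α) (hE : M.E.Finite)
    (hNE : N.E = M.E) :
    ∃ I X, M.Indep I ∧ N.Indep I ∧ X ⊆ M.E ∧ mrank M X + mrank N (M.E \ X) ≤ I.ncard := by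
  obtain ⟨E, hM⟩ : ∃ E, M.E = E := ⟨_, rfl⟩
  rw [hM] at hE
  induction E, hE using Set.Finite.induction_on generalizing M N with
  | empty => exact ⟨∅, ∅, M.empty_indep, N.empty_indep, empty_subset _, by simp [hM, mrank_empty]⟩
  | @insert e S heS hS ih =>
    have : M.Finite := ⟨hM ▸ hS.insert e⟩
    have : N.Finite := ⟨hNE ▸ hM ▸ hS.insert e⟩
    have heE : e ∈ M.E := hM ▸ mem_insert e S
    have hSE : M.E \ {e} = S := by rw [hM, insert_sdiff_self_of_notMem heS]
    obtain ⟨I₁, X₁, hI₁M, hI₁N, hX₁, h₁⟩ := ih (M ＼ {e}) (N ＼ {e}) (by simp [hNE]) hSE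
    have heX₁ : e ∉ X₁ := fun h ↦ (hX₁ h).2 rfl
    rw [mrank_delete_add_mrank_delete_diff M N heX₁] at h₁
    replace hI₁M := hI₁M.of_delete
    replace hI₁N := hI₁N.of_delete
    replace hX₁ : X₁ ⊆ M.E := hX₁.trans sdiff_subset
    by_cases heM : M.IsLoop e
    · exact ⟨I₁, insert e X₁, hI₁M, hI₁N, insert_subset heE hX₁, by rwa [heM.mrank_insert]⟩
    by_cases heN : N.IsLoop e
    · have hcompl : M.E \ X₁ = insert e (M.E \ insert e X₁) := by grind
      exact ⟨I₁, X₁, hI₁M, hI₁N, hX₁, by rwa [hcompl, heN.mrank_insert]⟩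
    rw [not_isLoop_iff heE] at heM
    rw [not_isLoop_iff (hNE ▸ heE)] at heN
    obtain ⟨I₂, X₂, hI₂M, hI₂N, hX₂, h₂⟩ := ih (M ／ {e}) (N ／ {e}) (by simp [hNE]) hSE
    obtain ⟨heI₂, hI₂M⟩ := heM.contractElem_indep_iff.1 hI₂M
    replace hI₂N := (heN.contractElem_indep_iff.1 hI₂N).2
    have hcontract := heM.mrank_contract_add_mrank_contract_diff heN hNE hX₂
    obtain ⟨X, hX, hle⟩ := exists_mrank_add_mrank_diff_le_max (N := N) (p := I₁.ncard)
      (q := (insert e I₂).ncard) heE hX₁ (hX₂.trans sdiff_subset) heX₁ (fun h ↦ (hX₂ h).2 rfl)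
      h₁ (by rw [ncard_insert_of_notMem heI₂ (hI₂M.finite.subset (subset_insert _ _))]; omega)
    rcases le_total I₁.ncard (insert e I₂).ncard with h | h
    · exact ⟨insert e I₂, X, hI₂M, hI₂N, hX, max_eq_right h ▸ hle⟩
    · exact ⟨I₁, X, hI₁M, hI₁N, hX, max_eq_left h ▸ hle⟩

end Matroid

/-- Edmonds' matroid intersection theorem. -/
theorem matroid_intersection {α : Type*} (M N : Matroid α) [M.Finite] (hNE : N.E = M.E) :
    sSup {n | ∃ I, M.Indep I ∧ N.Indep I ∧ I.ncard = n}
      = sInf {n | ∃ X ⊆ M.E, n = mrank M X + mrank N (M.E \ X)} := by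
  have : N.Finite := ⟨hNE ▸ M.ground_finite⟩
  obtain ⟨I, X, hIM, hIN, hX, hle⟩ :=
    Matroid.exists_indep_indep_mrank_add_mrank_diff_le_ncard M N M.ground_finite hNE
  have hmin : mrank M X + mrank N (M.E \ X) = I.ncard :=
    hle.antisymm (hIM.ncard_le_mrank_add_mrank_diff hIN X)
  rw [IsGreatest.csSup_eq (a := I.ncard), IsLeast.csInf_eq (a := I.ncard)]
  · exact ⟨⟨X, hX, hmin.symm⟩, by
      rintro _ ⟨Y, -, rfl⟩
      exact hIM.ncard_le_mrank_add_mrank_diff hIN Y⟩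
  · exact ⟨⟨I, hIM, hIN, rfl⟩, by
      rintro _ ⟨J, hJM, hJN, rfl⟩
      exact hmin ▸ hJM.ncard_le_mrank_add_mrank_diff hJN X⟩
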